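/- arXiv:2307.16069 — 7 statements merged into one kernel-verified Lean document; each statement's English description precedes it below -/
import Mathlib

section
/- Let A be the Perrin sequence defined by A(1)=0, A(2)=2, A(3)=3, and A(n)=A(n-2)+A(n-3) for n>3. Then for every prime p, p divides A(p). -/
/-!
`A n` is the trace of `M ^ n`, where `M` is the companion matrix of `X ^ 3 - X - 1`: the
relation `M ^ 3 = M + 1` gives the Perrin recurrence for the traces, and the first three
traces are `0, 2, 3`. Over `ZMod p` the Frobenius identity `trace (M ^ p) = (trace M) ^ p`
then gives `A p ≡ 0 ^ p = 0`.
-/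

open Matrix

variable (R : Type*) [CommRing R]

def perrinMatrix : Matrix (Fin 3) (Fin 3) R :=
  !![0, 1, 0; 0, 0, 1; 1, 1, 0]

theorem perrinMatrix_pow_three : perrinMatrix R ^ 3 = perrinMatrix R + 1 := by
  ext i j
  fin_cases i <;> fin_cases j <;>
    simp [perrinMatrix, pow_succ, mul_apply, Fin.sum_univ_three, one_fin_three]

theorem trace_perrinMatrix : trace (perrinMatrix R) = 0 := by
  simp [perrinMatrix, trace_fin_three]

theorem trace_perrinMatrix_sq : trace (perrinMatrix R ^ 2) = 2 := by
  simp [perrinMatrix, sq, trace_fin_three]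
  norm_num

theorem trace_perrinMatrix_pow_three : trace (perrinMatrix R ^ 3) = 3 := by
  rw [perrinMatrix_pow_three, trace_add, trace_perrinMatrix, trace_one]
  norm_num

theorem trace_perrinMatrix_pow_add_three (n : ℕ) :
    trace (perrinMatrix R ^ (n + 3)) =
      trace (perrinMatrix R ^ (n + 1)) + trace (perrinMatrix R ^ n) := by
  rw [pow_add, perrinMatrix_pow_three, mul_add, mul_one, ← pow_succ, trace_add]

theorem natCast_eq_trace_perrinMatrix_pow (A : ℕ → ℕ)
    (h1 : A 1 = 0) (h2 : A 2 = 2) (h3 : A 3 = 3)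
    (hrec : ∀ n, 3 < n → A n = A (n - 2) + A (n - 3)) :
    ∀ n, 1 ≤ n → (A n : R) = trace (perrinMatrix R ^ n)
  | 1, _ => by rw [h1, pow_one, trace_perrinMatrix, Nat.cast_zero]
  | 2, _ => by rw [h2, trace_perrinMatrix_sq, Nat.cast_ofNat]
  | 3, _ => by rw [h3, trace_perrinMatrix_pow_three, Nat.cast_ofNat]
  | m + 4, _ => by
    rw [hrec (m + 4) (by omega), Nat.cast_add, show m + 4 - 2 = m + 2 by omega,
      show m + 4 - 3 = m + 1 by omega,
      natCast_eq_trace_perrinMatrix_pow A h1 h2 h3 hrec (m + 2) (by omega),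
      natCast_eq_trace_perrinMatrix_pow A h1 h2 h3 hrec (m + 1) (by omega),
      ← trace_perrinMatrix_pow_add_three]

theorem perrin_divisibility (A : ℕ → ℕ)
    (h1 : A 1 = 0) (h2 : A 2 = 2) (h3 : A 3 = 3)
    (hrec : ∀ n, 3 < n → A n = A (n - 2) + A (n - 3)) :
    ∀ p : ℕ, p.Prime → p ∣ A p := by
  intro p hp
  have : Fact p.Prime := ⟨hp⟩
  rw [← ZMod.natCast_eq_zero_iff,
    natCast_eq_trace_perrinMatrix_pow (ZMod p) A h1 h2 h3 hrec p hp.one_lt.le,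
    ZMod.trace_pow_card, trace_perrinMatrix, zero_pow hp.ne_zero]
end

section
/- Let a(n) be the companion Pell sequence and b(n) = a(n) − 2. If 6 divides n and n divides b(n), then 3n divides b(3n). -/
/-!
Solving the recurrence gives `3 a(n) = 2^(n+2) + 2 (-1)^n`, so for even `n` we have
`3 b(n) = 4 (2^n - 1)` and hence `b(3n) = b(n) (4^n + 2^n + 1)`. For even `n`, `2^n ≡ 1 (mod 3)`,
so the second factor is divisible by `3`, and `n ∣ b(n)` gives `3n ∣ b(3n)`.
-/

theorem Int.three_dvd_sq_add_self_add_one {x : ℤ} (hx : x ≡ 1 [ZMOD 3]) : 3 ∣ x ^ 2 + x + 1 :=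
  (Int.modEq_zero_iff_dvd).mp (((hx.pow 2).add hx).add_right 1)

theorem Even.two_pow_modEq_one {n : ℕ} (hn : Even n) : (2 : ℤ) ^ n ≡ 1 [ZMOD 3] := by
  have h : (2 : ℤ) ^ n ≡ (-1) ^ n [ZMOD 3] := (show (2 : ℤ) ≡ -1 [ZMOD 3] by decide).pow n
  rwa [hn.neg_one_pow] at h

section CompanionPell

variable {a : ℕ → ℤ} (h0 : a 0 = 2) (h1 : a 1 = 2)
  (hrec : ∀ n, 2 ≤ n → a n = a (n - 1) + 2 * a (n - 2))
include h0 h1 hrec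

theorem companionPell_closed_form (n : ℕ) : 3 * a n = 2 ^ (n + 2) + 2 * (-1) ^ n := by
  induction n using Nat.twoStepInduction with
  | zero => rw [h0]; norm_num
  | one => rw [h1]; norm_num
  | more n ih ih' =>
    rw [hrec (n + 2) (by omega), Nat.add_sub_cancel, show n + 2 - 1 = n + 1 by omega]
    linear_combination ih' + 2 * ih

theorem companionPell_sub_two_of_even {n : ℕ} (hn : Even n) :
    3 * (a n - 2) = 4 * (2 ^ n - 1) := by
  linear_combination companionPell_closed_form h0 h1 hrec n + 2 * hn.neg_one_pow (α := ℤ)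

theorem companionPell_sub_two_three_mul {n : ℕ} (hn : Even n) :
    a (3 * n) - 2 = (a n - 2) * ((2 ^ n) ^ 2 + 2 ^ n + 1) := by
  have h := companionPell_sub_two_of_even h0 h1 hrec hn
  have h3 := companionPell_sub_two_of_even h0 h1 hrec (hn.mul_left 3)
  refine mul_left_cancel₀ (three_ne_zero (α := ℤ)) ?_
  linear_combination h3 - ((2 ^ n) ^ 2 + 2 ^ n + 1) * h

end CompanionPell

theorem companion_pell_pseudo_triple (a : ℕ → ℤ)
    (h0 : a 0 = 2) (h1 : a 1 = 2)
    (hrec : ∀ n, 2 ≤ n → a n = a (n - 1) + 2 * a (n - 2))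
    (b : ℕ → ℤ) (hb : ∀ n, b n = a n - 2) :
    ∀ n : ℕ, 6 ∣ n → (n : ℤ) ∣ b n → (3 * n : ℤ) ∣ b (3 * n) := by
  intro n h6 hdiv
  have hn : Even n := even_iff_two_dvd.mpr (dvd_trans (by norm_num) h6)
  rw [hb] at hdiv ⊢
  rw [companionPell_sub_two_three_mul h0 h1 hrec hn, mul_comm (3 : ℤ)]
  exact mul_dvd_mul hdiv (Int.three_dvd_sq_add_self_add_one hn.two_pow_modEq_one)
end

section
/- Let a(n) satisfy a(0)=2, a(1)=2, a(n)=2a(n-1)+2a(n-2) for n ≥ 2 (generating function (2−2x)/(1−2x−2x²)). Then for every prime p, a(p) ≡ 2 (mod p). -/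
/-!
The sequence is the trace sequence `a n = tr (M ^ n)` of the companion matrix `M = !![2, 2; 1, 0]`
of `X ^ 2 - 2 X - 2`. Over `ZMod p` the Frobenius gives `tr (M ^ p) = (tr M) ^ p = tr M = 2`.
-/

open Matrix

section Companion

variable {R : Type*} [CommRing R]

theorem companion_sq (c d : R) :
    !![c, d; 1, 0] ^ 2 = c • !![c, d; 1, 0] + d • (1 : Matrix (Fin 2) (Fin 2) R) := by
  ext i j
  fin_cases i <;> fin_cases j <;> simp [sq, Matrix.mul_apply, Fin.sum_univ_two]

theorem trace_companion_pow_add_two (c d : R) (n : ℕ) :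
    trace (!![c, d; 1, 0] ^ (n + 2)) =
      c * trace (!![c, d; 1, 0] ^ (n + 1)) + d * trace (!![c, d; 1, 0] ^ n) := by
  rw [pow_add, companion_sq, mul_add, mul_smul_comm, mul_smul_comm, mul_one, ← pow_succ,
    trace_add, trace_smul, trace_smul, smul_eq_mul, smul_eq_mul]

theorem eq_trace_companion_pow {u : ℕ → R} {c d : R} (h0 : u 0 = 2) (h1 : u 1 = c)
    (hrec : ∀ n, u (n + 2) = c * u (n + 1) + d * u n) (n : ℕ) :
    u n = trace (!![c, d; 1, 0] ^ n) := by
  induction n using Nat.twoStepInduction with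
  | zero => simp [h0]
  | one => simp [h1, trace_fin_two]
  | more n ih₀ ih₁ => rw [hrec, ih₀, ih₁, trace_companion_pow_add_two]

end Companion

theorem lucas_recurrence_prime_modEq {u : ℕ → ℤ} {c d : ℤ} (h0 : u 0 = 2) (h1 : u 1 = c)
    (hrec : ∀ n, u (n + 2) = c * u (n + 1) + d * u n) {p : ℕ} (hp : p.Prime) :
    u p ≡ c [ZMOD p] := by
  have := Fact.mk hp
  rw [← ZMod.intCast_eq_intCast_iff]
  have htrace : ∀ n, (u n : ZMod p) = trace (!![(c : ZMod p), d; 1, 0] ^ n) :=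
    eq_trace_companion_pow (by simp [h0]) (by simp [h1]) (fun n => by simp [hrec])
  rw [htrace, ZMod.trace_pow_card, trace_fin_two, ZMod.pow_card]
  simp

theorem thm3_prime (a : ℕ → ℤ)
    (h0 : a 0 = 2) (h1 : a 1 = 2)
    (hrec : ∀ n, 2 ≤ n → a n = 2 * a (n - 1) + 2 * a (n - 2)) :
    ∀ p : ℕ, p.Prime → a p ≡ 2 [ZMOD (p : ℤ)] := fun _ hp =>
  lucas_recurrence_prime_modEq h0 h1 (fun n => by simpa using hrec (n + 2) (by omega)) hp
end

section
/- Let a(n) satisfy a(0)=2, a(1)=2, a(n)=2a(n-1)+2a(n-2). Then for every i ≥ 2, a(3^i) ≡ 2 (mod 3^i), so all powers 3^i with i ≥ 2 are pseudoprimes for this test. -/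
/-!
With α = 1 + √3 ∈ ℤ[√3] (trace 2, norm -2), the recurrence is that of 2·Re(αⁿ), so
a n = 2·Re(αⁿ). Since α³ = 10 + 6√3 ≡ 1 (mod 3), raising to the power 3ᵏ gains one factor of 3
at each step, so α^(3^(k+1)) ≡ 1 (mod 3^(k+1)) in ℤ[√3]; taking real parts gives the claim.
-/

namespace Zsqrtd

variable {d : ℤ}

theorem sq_eq_two_re_mul_sub_norm (z : ℤ√d) : z ^ 2 = 2 * z.re * z - z.norm := by
  ext <;> simp [sq, re_mul, im_mul, norm_def] <;> ring

theorem re_pow_add_two (z : ℤ√d) (n : ℕ) :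
    (z ^ (n + 2)).re = 2 * z.re * (z ^ (n + 1)).re - z.norm * (z ^ n).re := by
  have : z ^ (n + 2) = 2 * z.re * z ^ (n + 1) - z.norm * z ^ n := by
    rw [pow_add, sq_eq_two_re_mul_sub_norm]; ring
  simp [this, re_mul]

end Zsqrtd

theorem eq_two_mul_re_pow_of_recurrence {d : ℤ} (z : ℤ√d) (a : ℕ → ℤ) (h0 : a 0 = 2)
    (h1 : a 1 = 2 * z.re) (hrec : ∀ n, a (n + 2) = 2 * z.re * a (n + 1) - z.norm * a n) (n : ℕ) :
    a n = 2 * (z ^ n).re := by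
  induction n using Nat.twoStepInduction with
  | zero => simp [h0]
  | one => simp [h1]
  | more n ih₀ ih₁ => rw [hrec, ih₀, ih₁, Zsqrtd.re_pow_add_two]; ring

theorem three_pow_dvd_re_pow_three_pow_sub_one (k : ℕ) :
    (3 : ℤ) ^ (k + 1) ∣ ((⟨1, 1⟩ : ℤ√3) ^ 3 ^ (k + 1)).re - 1 := by
  have hcube : ((3 : ℕ) : ℤ√3) ∣ (⟨1, 1⟩ : ℤ√3) ^ 3 - 1 := ⟨⟨3, 2⟩, by ext <;> decide⟩
  have hlift : (((3 : ℤ) ^ (k + 1) : ℤ) : ℤ√3) ∣ (⟨1, 1⟩ : ℤ√3) ^ 3 ^ (k + 1) - 1 := by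
    simpa [← pow_mul, ← pow_succ'] using dvd_sub_pow_of_dvd_sub hcube k
  simpa using ((Zsqrtd.intCast_dvd _ _).mp hlift).1

theorem thm3_pseudoprimes_pow3 (a : ℕ → ℤ)
    (h0 : a 0 = 2) (h1 : a 1 = 2)
    (hrec : ∀ n, 2 ≤ n → a n = 2 * a (n - 1) + 2 * a (n - 2)) :
    ∀ i : ℕ, 2 ≤ i → a (3 ^ i) ≡ 2 [ZMOD ((3 ^ i : ℕ) : ℤ)] := by
  intro i hi
  obtain ⟨k, rfl⟩ : ∃ k, i = k + 1 := ⟨i - 1, by omega⟩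
  have hnorm : (⟨1, 1⟩ : ℤ√3).norm = -2 := rfl
  have ha := eq_two_mul_re_pow_of_recurrence (⟨1, 1⟩ : ℤ√3) a h0 h1 fun n => by
    simpa [hnorm] using hrec (n + 2) (by omega)
  rw [ha, Nat.cast_pow, Nat.cast_ofNat, Int.modEq_comm, Int.modEq_iff_dvd]
  have := (three_pow_dvd_re_pow_three_pow_sub_one k).mul_left 2
  rwa [mul_sub, mul_one] at this
end

section
/- Let a(n) satisfy a(0)=2, a(1)=2, a(n)=2a(n-1)+2a(n-2). Then for every i ≥ 1, a(2·3^i) ≡ 2 (mod 2·3^i). -/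
/-!
In `ℤ√3` put `u = 1 + √3`, so that `a n = uⁿ + ūⁿ = 2 · re (uⁿ)`. Since `u³ = 10 + 6√3 ≡ 1 (mod 3)`,
lifting the exponent gives `u^(3^i) ≡ 1 (mod 3^i)`, hence `u^(2·3^i) ≡ 1 (mod 3^i)`; taking real parts,
`re (u^(2·3^i)) ≡ 1 (mod 3^i)`, and doubling gives the claim.
-/

namespace Zsqrtd

def onePlusSqrtThree : ℤ√3 := ⟨1, 1⟩

local notation "u" => onePlusSqrtThree

theorem onePlusSqrtThree_pow_add_two (n : ℕ) : u ^ (n + 2) = 2 * u ^ (n + 1) + 2 * u ^ n := by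
  have hu : u ^ 2 = 2 * u + 2 := by ext <;> simp [onePlusSqrtThree, sq]
  rw [pow_add, hu]
  ring

theorem eq_two_mul_re_onePlusSqrtThree_pow (a : ℕ → ℤ) (h0 : a 0 = 2) (h1 : a 1 = 2)
    (hrec : ∀ n, a (n + 2) = 2 * a (n + 1) + 2 * a n) (n : ℕ) :
    a n = 2 * (u ^ n).re := by
  induction n using Nat.twoStepInduction with
  | zero => simp [h0]
  | one => simp [h1, onePlusSqrtThree]
  | more n ih₀ ih₁ =>
    rw [hrec, ih₀, ih₁, onePlusSqrtThree_pow_add_two]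
    simp only [re_add, re_mul, re_ofNat, im_ofNat]
    ring

theorem three_pow_dvd_onePlusSqrtThree_pow_sub_one (k : ℕ) :
    (3 : ℤ√3) ^ (k + 1) ∣ u ^ 3 ^ (k + 1) - 1 := by
  have hcube : ((3 : ℕ) : ℤ√3) ∣ u ^ 3 - 1 := ⟨⟨3, 2⟩, by ext <;> simp [onePlusSqrtThree, pow_succ]⟩
  simpa [← pow_mul, ← pow_succ'] using dvd_sub_pow_of_dvd_sub hcube k

end Zsqrtd

open Zsqrtd in
theorem thm3_pseudoprimes_two_pow3 (a : ℕ → ℤ)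
    (h0 : a 0 = 2) (h1 : a 1 = 2)
    (hrec : ∀ n, 2 ≤ n → a n = 2 * a (n - 1) + 2 * a (n - 2)) :
    ∀ i : ℕ, 1 ≤ i → a (2 * 3 ^ i) ≡ 2 [ZMOD ((2 * 3 ^ i : ℕ) : ℤ)] := by
  intro i hi
  obtain ⟨k, rfl⟩ : ∃ k, i = k + 1 := ⟨i - 1, by omega⟩
  set x : ℤ√3 := onePlusSqrtThree ^ 3 ^ (k + 1) with hx_def
  have ha : a (2 * 3 ^ (k + 1)) = 2 * (x ^ 2).re := by
    rw [eq_two_mul_re_onePlusSqrtThree_pow a h0 h1 (fun n ↦ hrec (n + 2) (by omega)), hx_def,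
      ← pow_mul, mul_comm (3 ^ (k + 1))]
  have hx : ((3 ^ (k + 1) : ℤ) : ℤ√3) ∣ x ^ 2 - 1 := by
    push_cast
    exact (three_pow_dvd_onePlusSqrtThree_pow_sub_one k).trans (sub_one_dvd_pow_sub_one x 2)
  have hre : (3 : ℤ) ^ (k + 1) ∣ (x ^ 2).re - 1 := by
    simpa using ((intCast_dvd _ _).1 hx).1
  rw [ha, Int.modEq_comm, Int.modEq_iff_dvd]
  push_cast
  simpa [mul_sub] using mul_dvd_mul_left 2 hre
end

section
/- Let a(n) satisfy a(0)=3, a(1)=0, a(2)=−4, a(n)=−2a(n-2)−2a(n-3) for n ≥ 3 (generating function (2x²+3)/(1+2x²+2x³)). Then for every prime p, p divides a(p). -/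
/-!
The sequence is the power-sum sequence of the roots of `x³ + 2x + 2`: by Cayley–Hamilton the
traces of the powers of its companion matrix `C` obey the same recurrence, so `a n = trace (C ^ n)`.
Modulo a prime `p`, the trace of `C ^ p` is the `p`-th power of the trace of `C` (Frobenius on the
eigenvalues), and `trace C = 0`.
-/

open Matrix

theorem Matrix.prime_dvd_trace_pow_sub_trace_pow {n : Type*} [Fintype n] [DecidableEq n]
    (M : Matrix n n ℤ) {p : ℕ} (hp : p.Prime) : (p : ℤ) ∣ (M ^ p).trace - M.trace ^ p := by
  have : Fact p.Prime := ⟨hp⟩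
  have h := ZMod.trace_pow_card (M.map (Int.castRingHom (ZMod p)))
  rw [← Matrix.map_pow, ← AddMonoidHom.map_trace, ← AddMonoidHom.map_trace] at h
  rwa [← ZMod.intCast_zmod_eq_zero_iff_dvd, Int.cast_sub, Int.cast_pow, sub_eq_zero]

/-- The companion matrix of `x³ + 2x + 2`. -/
def companion : Matrix (Fin 3) (Fin 3) ℤ := !![0, 1, 0; 0, 0, 1; -2, -2, 0]

theorem trace_companion : companion.trace = 0 := by
  simp [companion, trace_fin_three]

theorem companion_pow_three : companion ^ 3 = (-2 : ℤ) • companion - (2 : ℤ) • 1 := by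
  ext i j
  fin_cases i <;> fin_cases j <;> simp [companion, pow_succ, one_fin_three]

theorem trace_companion_pow_add_three (n : ℕ) :
    (companion ^ (n + 3)).trace =
      -2 * (companion ^ (n + 1)).trace - 2 * (companion ^ n).trace := by
  rw [pow_add, companion_pow_three, Matrix.mul_sub, Matrix.mul_smul, Matrix.mul_smul, mul_one,
    ← pow_succ, trace_sub, trace_smul, trace_smul, smul_eq_mul, smul_eq_mul]

theorem eq_trace_companion_pow_s15 (a : ℕ → ℤ)
    (h0 : a 0 = 3) (h1 : a 1 = 0) (h2 : a 2 = -4)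
    (hrec : ∀ n, 3 ≤ n → a n = -2 * a (n - 2) - 2 * a (n - 3)) (n : ℕ) :
    a n = (companion ^ n).trace := by
  induction n using Nat.strong_induction_on with
  | _ n ih =>
    match n with
    | 0 => simp [h0]
    | 1 => simp [h1, trace_companion]
    | 2 => simp [h2, companion, pow_two, trace_fin_three]
    | m + 3 =>
      rw [hrec (m + 3) (by omega), trace_companion_pow_add_three, Nat.add_sub_cancel,
        show m + 3 - 2 = m + 1 by omega, ih m (by omega), ih (m + 1) (by omega)]

theorem thm4_prime (a : ℕ → ℤ)
    (h0 : a 0 = 3) (h1 : a 1 = 0) (h2 : a 2 = -4)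
    (hrec : ∀ n, 3 ≤ n → a n = -2 * a (n - 2) - 2 * a (n - 3)) :
    ∀ p : ℕ, p.Prime → (p : ℤ) ∣ a p := by
  intro p hp
  have := companion.prime_dvd_trace_pow_sub_trace_pow hp
  rwa [trace_companion, zero_pow hp.ne_zero, sub_zero,
    ← eq_trace_companion_pow_s15 a h0 h1 h2 hrec p] at this
end

section
/- Let a(n) satisfy a(0)=3, a(1)=0, a(2)=−4, a(n)=−2a(n-2)−2a(n-3) for n ≥ 3, and define b(n) = a(2n) − a(n)². Then b satisfies b(1)=−4, b(2)=−8, b(3)=−40, and b(n)=2b(n-1)+4b(n-3) for n > 3. -/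
/-!
Over `ℂ` write `x ^ 3 + 2 x + 2 = (x - α)(x - β)(x - γ)`. The initial values and the recurrence
say that `a n = α ^ n + β ^ n + γ ^ n`, so `b n = -2 ((αβ) ^ n + (αγ) ^ n + (βγ) ^ n)`: up to the
factor `-2`, `b` is the power-sum sequence of the pairwise products `αβ, αγ, βγ`. By Vieta these are
the roots of `y ^ 3 - 2 y ^ 2 - 4`, whence the recurrence `b n = 2 b (n - 1) + 4 b (n - 3)`.
-/

theorem IsAlgClosed.exists_cubic_vieta {K : Type*} [Field K] [IsAlgClosed K] (b c d : K) :
    ∃ x y z : K, x + y + z = -b ∧ x * y + x * z + y * z = c ∧ x * y * z = -d := by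
  have ha : (⟨1, b, c, d⟩ : Cubic K).a ≠ 0 := one_ne_zero
  obtain ⟨x, y, z, hroots⟩ := (Cubic.splits_iff_roots_eq_three (φ := RingHom.id K) ha).mp
    (IsAlgClosed.splits _)
  have hb := Cubic.b_eq_three_roots ha hroots
  have hc := Cubic.c_eq_three_roots ha hroots
  have hd := Cubic.d_eq_three_roots ha hroots
  simp only [RingHom.id_apply, one_mul] at hb hc hd
  exact ⟨x, y, z, by rw [hb, neg_neg], hc.symm, by rw [hd, neg_neg]⟩

section PowerSums

variable {R : Type*} [CommRing R]

def powerSum3 (x y z : R) (n : ℕ) : R := x ^ n + y ^ n + z ^ n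

theorem powerSum3_add_three (x y z : R) (n : ℕ) :
    powerSum3 x y z (n + 3) =
      (x + y + z) * powerSum3 x y z (n + 2) - (x * y + x * z + y * z) * powerSum3 x y z (n + 1) +
        x * y * z * powerSum3 x y z n := by
  simp only [powerSum3]; ring

theorem powerSum3_pairwise_add_three (x y z : R) (n : ℕ) :
    powerSum3 (x * y) (x * z) (y * z) (n + 3) =
      (x * y + x * z + y * z) * powerSum3 (x * y) (x * z) (y * z) (n + 2) -
        x * y * z * (x + y + z) * powerSum3 (x * y) (x * z) (y * z) (n + 1) +
          (x * y * z) ^ 2 * powerSum3 (x * y) (x * z) (y * z) n := by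
  rw [powerSum3_add_three]; ring

theorem powerSum3_two_mul_sub_sq (x y z : R) (n : ℕ) :
    powerSum3 x y z (2 * n) - powerSum3 x y z n ^ 2 = -2 * powerSum3 (x * y) (x * z) (y * z) n := by
  simp only [powerSum3]; ring

theorem eq_powerSum3_of_rec {x y z : R} {u : ℕ → R} (h0 : u 0 = 3)
    (h1 : u 1 = x + y + z) (h2 : u 2 = x ^ 2 + y ^ 2 + z ^ 2)
    (hrec : ∀ n, u (n + 3) =
      (x + y + z) * u (n + 2) - (x * y + x * z + y * z) * u (n + 1) + x * y * z * u n)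
    (n : ℕ) : u n = powerSum3 x y z n := by
  induction n using Nat.strong_induction_on with
  | _ n ih =>
    match n with
    | 0 => rw [h0, powerSum3]; norm_num
    | 1 => simp [h1, powerSum3]
    | 2 => exact h2
    | n + 3 =>
      rw [hrec, ih n (by omega), ih (n + 1) (by omega), ih (n + 2) (by omega), powerSum3_add_three]

end PowerSums

theorem thm4_b_recurrence (a : ℕ → ℤ)
    (h0 : a 0 = 3) (h1 : a 1 = 0) (h2 : a 2 = -4)
    (hrec : ∀ n, 3 ≤ n → a n = -2 * a (n - 2) - 2 * a (n - 3))
    (b : ℕ → ℤ) (hb : ∀ n, b n = a (2 * n) - (a n) ^ 2) :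
    b 1 = -4 ∧ b 2 = -8 ∧ b 3 = -40 ∧
      ∀ n, 3 < n → b n = 2 * b (n - 1) + 4 * b (n - 3) := by
  have hrec' (n : ℕ) : a (n + 3) = -2 * a (n + 1) - 2 * a n := by
    simpa using hrec (n + 3) (by omega)
  obtain ⟨x, y, z, he₁, he₂, he₃⟩ := IsAlgClosed.exists_cubic_vieta (0 : ℂ) 2 2
  rw [neg_zero] at he₁
  have ha (n : ℕ) : (a n : ℂ) = powerSum3 x y z n := by
    refine eq_powerSum3_of_rec (u := fun n ↦ (a n : ℂ)) (by simp [h0]) (by simp [h1, he₁])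
      ?_ (fun n ↦ ?_) n
    · push_cast [h2]; linear_combination 2 * he₂ - (x + y + z) * he₁
    · push_cast [hrec', he₁, he₂, he₃]; ring
  have hb' (n : ℕ) : (b n : ℂ) = -2 * powerSum3 (x * y) (x * z) (y * z) n := by
    push_cast [hb, ha]; exact powerSum3_two_mul_sub_sq x y z n
  have hbrec (n : ℕ) : b (n + 3) = 2 * b (n + 2) + 4 * b n := by
    have hq := powerSum3_pairwise_add_three x y z n
    rw [he₁, he₂, he₃] at hq
    have : (b (n + 3) : ℂ) = 2 * b (n + 2) + 4 * b n := by rw [hb', hb', hb', hq]; ring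
    exact_mod_cast this
  have ha₃ : a 3 = -6 := by rw [hrec' 0, h1, h0]; rfl
  have ha₄ : a 4 = 8 := by rw [hrec' 1, h2, h1]; rfl
  have ha₆ : a 6 = -4 := by rw [hrec' 3, ha₄, ha₃]; rfl
  refine ⟨by rw [hb, h2, h1]; rfl, by rw [hb, ha₄, h2]; rfl, by rw [hb, ha₆, ha₃]; rfl, ?_⟩
  intro n hn
  obtain ⟨m, rfl⟩ : ∃ m, n = m + 4 := ⟨n - 4, by omega⟩
  simpa using hbrec (m + 1)
end
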